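/- arXiv:2011.08933 — 3 statements merged into one kernel-verified Lean document; each statement's English description precedes it below -/
import Mathlib

section
/- Suppose E₁ ∩ E₂ = ∅. Then the problem of minimizing ‖x₁ − x₂‖ over (x₁, x₂) ∈ E₁ × E₂ has a unique optimal solution: if (x₁*, x₂*) and (x₁', x₂') both belong to E₁ × E₂ and both minimize ‖x₁ − x₂‖ over E₁ × E₂, then x₁* = x₁' and x₂* = x₂'. -/
/-!
Both ellipsoids are strictly convex, being sublevel sets of positive definite quadratic forms.
For two nearest pairs (a, b) and (a', b'), the pair of midpoints is feasible, so strict convexity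
of the Euclidean norm forces a - b = a' - b'. If a ≠ a', the midpoint of a and a' lies in the
interior of E₁ and realises the minimal distance to the midpoint of b and b'; a point in the
interior can only be nearest to a point it equals, so the two midpoints coincide, contradicting
disjointness.
-/

open Matrix Set Filter Topology

open scoped RealInnerProductSpace

lemma Matrix.PosDef.inner_toEuclideanLin_self_pos {n : Type*} [Fintype n] [DecidableEq n]
    {Q : Matrix n n ℝ} (hQ : Q.PosDef) {x : EuclideanSpace ℝ n} (hx : x ≠ 0) :
    0 < ⟪x, toEuclideanLin Q x⟫ := by
  rw [EuclideanSpace.inner_eq_star_dotProduct]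
  simp only [ofLp_toLpLin, toLin'_apply, star_trivial, dotProduct_comm]
  exact hQ.dotProduct_mulVec_pos fun h => hx (by simpa using congrArg (WithLp.toLp 2) h)

section QuadraticForm

variable {E : Type*} [NormedAddCommGroup E] [InnerProductSpace ℝ E]

lemma inner_map_combo_self (T : E →ₗ[ℝ] E) (x y : E) {a b : ℝ} (hab : a + b = 1) :
    ⟪a • x + b • y, T (a • x + b • y)⟫ =
      a * ⟪x, T x⟫ + b * ⟪y, T y⟫ - a * b * ⟪x - y, T (x - y)⟫ := by
  obtain rfl : b = 1 - a := by linarith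
  simp only [map_add, map_sub, map_smul, inner_add_left, inner_add_right, inner_sub_left,
    inner_sub_right, real_inner_smul_left, real_inner_smul_right]
  ring

lemma strictConvexOn_inner_map_sub_self {T : E →ₗ[ℝ] E} (hT : ∀ x ≠ 0, 0 < ⟪x, T x⟫)
    (z : E) : StrictConvexOn ℝ univ fun x => ⟪x - z, T (x - z)⟫ := by
  refine ⟨convex_univ, fun x _ y _ hxy a b ha hb hab => ?_⟩
  have hcombo : a • x + b • y - z = a • (x - z) + b • (y - z) := by
    obtain rfl : b = 1 - a := by linarith
    module
  have hpos := hT (x - y) (sub_ne_zero.mpr hxy)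
  simp only [smul_eq_mul]
  rw [hcombo, inner_map_combo_self T _ _ hab, sub_sub_sub_cancel_right]
  linarith [mul_pos (mul_pos ha hb) hpos]

end QuadraticForm

lemma StrictConvexOn.strictConvex_setOf_le {E : Type*} [TopologicalSpace E]
    [AddCommGroup E] [Module ℝ E] {f : E → ℝ} (hf : StrictConvexOn ℝ univ f)
    (hcont : Continuous f) (r : ℝ) :
    StrictConvex ℝ {x | f x ≤ r} := by
  intro x hx y hy hxy a b ha hb hab
  refine interior_maximal (t := {x | f x < r}) (fun _ h => le_of_lt (a := f _) h)
    (isOpen_lt hcont continuous_const) ?_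
  calc f (a • x + b • y) < a • f x + b • f y := hf.2 trivial trivial hxy ha hb hab
    _ ≤ a • r + b • r := by gcongr <;> assumption
    _ = r := by rw [← add_smul, hab, one_smul]

section NearestPoints

variable {E : Type*} [NormedAddCommGroup E] [NormedSpace ℝ E]

lemma eq_of_mem_interior_of_forall_norm_sub_le {s : Set E} {a b : E} (ha : a ∈ interior s)
    (hmin : ∀ x ∈ s, ‖a - b‖ ≤ ‖x - b‖) : a = b := by
  by_contra hne
  have hpath : Tendsto (fun t : ℝ => a + t • (b - a)) (𝓝[>] 0) (𝓝 a) := by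
    have hcont : Continuous fun t : ℝ => a + t • (b - a) := by fun_prop
    simpa using (hcont.tendsto 0).mono_left nhdsWithin_le_nhds
  obtain ⟨t, hts, ht0, ht1⟩ :=
    ((hpath.eventually (mem_interior_iff_mem_nhds.mp ha)).and (Ioo_mem_nhdsGT one_pos)).exists
  have hshift : a + t • (b - a) - b = (1 - t) • (a - b) := by module
  have hcloser := hmin _ hts
  rw [hshift, norm_smul, Real.norm_of_nonneg (by linarith)] at hcloser
  linarith [mul_pos ht0 (norm_pos_iff.mpr (sub_ne_zero.mpr hne))]

variable [StrictConvexSpace ℝ E] {s t : Set E} {a b a' b' : E}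

lemma sub_eq_sub_of_forall_norm_sub_le (hs : Convex ℝ s) (ht : Convex ℝ t) (ha : a ∈ s)
    (hb : b ∈ t) (ha' : a' ∈ s) (hb' : b' ∈ t) (hmin : ∀ x ∈ s, ∀ y ∈ t, ‖a - b‖ ≤ ‖x - y‖)
    (hmin' : ∀ x ∈ s, ∀ y ∈ t, ‖a' - b'‖ ≤ ‖x - y‖) : a - b = a' - b' := by
  by_contra hne
  have hnorm : ‖a - b‖ = ‖a' - b'‖ := le_antisymm (hmin _ ha' _ hb') (hmin' _ ha _ hb)
  have hmid := hmin _ (hs ha ha' (by norm_num) (by norm_num) (add_halves 1))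
    _ (ht hb hb' (by norm_num) (by norm_num) (add_halves 1))
  have hsplit : ((1 / 2 : ℝ) • a + (1 / 2 : ℝ) • a') - ((1 / 2 : ℝ) • b + (1 / 2 : ℝ) • b')
      = (1 / 2 : ℝ) • ((a - b) + (a' - b')) := by
    module
  rw [hsplit] at hmid
  exact hmid.not_gt ((norm_midpoint_lt_iff hnorm).mpr hne)

theorem StrictConvex.eq_of_forall_norm_sub_le (hs : StrictConvex ℝ s) (ht : Convex ℝ t)
    (hst : Disjoint s t) (ha : a ∈ s) (hb : b ∈ t) (ha' : a' ∈ s) (hb' : b' ∈ t)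
    (hmin : ∀ x ∈ s, ∀ y ∈ t, ‖a - b‖ ≤ ‖x - y‖)
    (hmin' : ∀ x ∈ s, ∀ y ∈ t, ‖a' - b'‖ ≤ ‖x - y‖) : a = a' ∧ b = b' := by
  have hsub := sub_eq_sub_of_forall_norm_sub_le hs.convex ht ha hb ha' hb' hmin hmin'
  have haa' : a = a' := by
    by_contra hne
    have hm₁ := hs ha ha' hne (by norm_num : (0 : ℝ) < 1 / 2) (by norm_num) (add_halves 1)
    have hm₂ := ht hb hb' (by norm_num : (0 : ℝ) ≤ 1 / 2) (by norm_num) (add_halves 1)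
    have hdiff : ((1 / 2 : ℝ) • a + (1 / 2 : ℝ) • a') - ((1 / 2 : ℝ) • b + (1 / 2 : ℝ) • b')
        = a - b := by
      linear_combination (norm := module) (1 / 2 : ℝ) • hsub.symm
    have hmid :=
      eq_of_mem_interior_of_forall_norm_sub_le hm₁ fun x hx => hdiff ▸ hmin x hx _ hm₂
    exact hst.ne_of_mem (interior_subset hm₁) hm₂ hmid
  subst haa'
  exact ⟨rfl, sub_right_injective hsub⟩

end NearestPoints

def ellipsoid {n : Type*} [Fintype n] [DecidableEq n] (Q : Matrix n n ℝ)
    (z : EuclideanSpace ℝ n) : Set (EuclideanSpace ℝ n) :=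
  {x | ⟪x - z, toEuclideanLin Q (x - z)⟫ ≤ 1}

lemma Matrix.PosDef.strictConvex_ellipsoid {n : Type*} [Fintype n] [DecidableEq n]
    {Q : Matrix n n ℝ} (hQ : Q.PosDef) (z : EuclideanSpace ℝ n) :
    StrictConvex ℝ (ellipsoid Q z) :=
  have hform := strictConvexOn_inner_map_sub_self (fun _ => hQ.inner_toEuclideanLin_self_pos) z
  hform.strictConvex_setOf_le (by fun_prop) 1

/-- if the two ellipsoids are disjoint, the pair of nearest points is unique. -/
theorem stmt_8 (d : ℕ)
    (Q₁ Q₂ : Matrix (Fin d) (Fin d) ℝ) (hQ₁ : Q₁.PosDef) (hQ₂ : Q₂.PosDef)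
    (z₁ z₂ : EuclideanSpace ℝ (Fin d))
    (hdisj : {x : EuclideanSpace ℝ (Fin d) |
        (inner ℝ (x - z₁) (Matrix.toEuclideanLin Q₁ (x - z₁)) : ℝ) ≤ 1} ∩
      {x : EuclideanSpace ℝ (Fin d) |
        (inner ℝ (x - z₂) (Matrix.toEuclideanLin Q₂ (x - z₂)) : ℝ) ≤ 1} = ∅)
    (x₁s x₂s x₁' x₂' : EuclideanSpace ℝ (Fin d))
    (hx₁s : (inner ℝ (x₁s - z₁) (Matrix.toEuclideanLin Q₁ (x₁s - z₁)) : ℝ) ≤ 1)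
    (hx₂s : (inner ℝ (x₂s - z₂) (Matrix.toEuclideanLin Q₂ (x₂s - z₂)) : ℝ) ≤ 1)
    (hx₁' : (inner ℝ (x₁' - z₁) (Matrix.toEuclideanLin Q₁ (x₁' - z₁)) : ℝ) ≤ 1)
    (hx₂' : (inner ℝ (x₂' - z₂) (Matrix.toEuclideanLin Q₂ (x₂' - z₂)) : ℝ) ≤ 1)
    (hopt : ∀ x₁ x₂ : EuclideanSpace ℝ (Fin d),
      (inner ℝ (x₁ - z₁) (Matrix.toEuclideanLin Q₁ (x₁ - z₁)) : ℝ) ≤ 1 →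
      (inner ℝ (x₂ - z₂) (Matrix.toEuclideanLin Q₂ (x₂ - z₂)) : ℝ) ≤ 1 →
      ‖x₁s - x₂s‖ ≤ ‖x₁ - x₂‖)
    (hopt' : ∀ x₁ x₂ : EuclideanSpace ℝ (Fin d),
      (inner ℝ (x₁ - z₁) (Matrix.toEuclideanLin Q₁ (x₁ - z₁)) : ℝ) ≤ 1 →
      (inner ℝ (x₂ - z₂) (Matrix.toEuclideanLin Q₂ (x₂ - z₂)) : ℝ) ≤ 1 →
      ‖x₁' - x₂'‖ ≤ ‖x₁ - x₂‖) :
    x₁s = x₁' ∧ x₂s = x₂' :=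
  (hQ₁.strictConvex_ellipsoid z₁).eq_of_forall_norm_sub_le
    (hQ₂.strictConvex_ellipsoid z₂).convex (disjoint_iff_inter_eq_empty.mpr hdisj)
    hx₁s hx₂s hx₁' hx₂'
    (fun x₁ hx₁ x₂ hx₂ => hopt x₁ x₂ hx₁ hx₂) (fun x₁ hx₁ x₂ hx₂ => hopt' x₁ x₂ hx₁ hx₂)
end

section
/- (Nondegeneracy lemma for the ADMM x-step.) Let Λ ⊂ ℝ^d × ℝ^d be a bounded set. Then there exists τ* > 0 such that for every τ ≥ τ*, every λ = (λ₁, λ₂) ∈ Λ, and every y = (y₁, y₂) ∈ ℝ^d × ℝ^d with ‖y₁‖ = ‖y₂‖ = 1, the (unique) solution x* = (x₁*, x₂*) of the linear system H(τ)x* = diag(S₁, S₂)(λ + τ(y + c)) satisfies Sᵢxᵢ* − cᵢ − (1/τ)λᵢ ≠ 0 for i ∈ {1, 2}. -/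
/-!
If the first residual vanished, then `S₁x₁ = c₁ + λ₁/τ`, hence `τQ₁x₁ = S₁(τc₁ + λ₁)` and the first
equation collapses to `x₁ - x₂ = τS₁y₁`, whose norm grows linearly in `τ` since `S₁` is invertible
and `‖y₁‖ = 1`. But `x₁ = S₁⁻¹(c₁ + λ₁/τ)` and, after dividing the second equation by `τ`,
`x₂ = Q₂⁻¹(S₁y₁ + S₂(λ₂/τ + y₂ + c₂))` stay bounded for `τ ≥ 1`, uniformly over the bounded set `Λ`.
Exchanging the two blocks handles the second residual.
-/

open Matrix NNReal

theorem Matrix.exists_antilipschitzWith_toEuclideanCLM {n 𝕜 : Type*} [RCLike 𝕜] [Fintype n]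
    [DecidableEq n] {M : Matrix n n 𝕜} (hM : IsUnit M) :
    ∃ K, AntilipschitzWith K (toEuclideanCLM (𝕜 := 𝕜) M) := by
  obtain ⟨u, hu⟩ := hM.map (toEuclideanCLM (n := n) (𝕜 := 𝕜))
  rw [← hu]
  exact ⟨_, (ContinuousLinearEquiv.ofUnit u).antilipschitz⟩

section ResidualBound

variable {E : Type*} [NormedAddCommGroup E] [NormedSpace ℝ E]
  {S₁ S₂ Q₁ Q₂ : E →L[ℝ] E} {τ : ℝ} {l₁ l₂ y₁ y₂ c₁ c₂ x₁ x₂ : E}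

theorem sub_eq_smul_of_residual_eq_zero (hτ : τ ≠ 0) (hQ₁ : Q₁ = S₁ * S₁)
    (h₁ : x₁ + τ • Q₁ x₁ - x₂ = S₁ (l₁ + τ • (y₁ + c₁)))
    (hres : S₁ x₁ - c₁ - (1 / τ) • l₁ = 0) :
    x₁ - x₂ = τ • S₁ y₁ := by
  have hS₁x₁ : τ • S₁ x₁ = τ • c₁ + l₁ := by
    rw [sub_sub, sub_eq_zero] at hres
    rw [hres, smul_add, one_div, smul_inv_smul₀ hτ]
  have hQ₁x₁ : τ • Q₁ x₁ = S₁ (τ • c₁ + l₁) := by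
    rw [hQ₁, mul_apply_eq_comp, ← map_smul, hS₁x₁]
  rw [hQ₁x₁] at h₁
  simp only [map_add, map_smul] at h₁
  linear_combination (norm := module) h₁

theorem apply_eq_of_sub_eq_smul (hτ : τ ≠ 0)
    (h₂ : x₂ + τ • Q₂ x₂ - x₁ = S₂ (l₂ + τ • (y₂ + c₂))) (hx : x₁ - x₂ = τ • S₁ y₁) :
    Q₂ x₂ = S₁ y₁ + S₂ ((1 / τ) • l₂ + (y₂ + c₂)) := by
  apply smul_right_injective E hτ
  have hl₂ : l₂ = τ • (1 / τ) • l₂ := by rw [one_div, smul_inv_smul₀ hτ]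
  rw [hl₂, ← smul_add] at h₂
  simp only [map_smul] at h₂ ⊢
  linear_combination (norm := module) h₂ + hx

theorem le_of_residual_eq_zero {K₁ K₂ : ℝ≥0} (hS₁ : AntilipschitzWith K₁ S₁)
    (hQ₂ : AntilipschitzWith K₂ Q₂) (hQ₁ : Q₁ = S₁ * S₁) {R : ℝ} (hτ : 1 ≤ τ)
    (hl₁ : ‖l₁‖ ≤ R) (hl₂ : ‖l₂‖ ≤ R) (hy₁ : ‖y₁‖ = 1) (hy₂ : ‖y₂‖ ≤ 1)
    (h₁ : x₁ + τ • Q₁ x₁ - x₂ = S₁ (l₁ + τ • (y₁ + c₁)))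
    (h₂ : x₂ + τ • Q₂ x₂ - x₁ = S₂ (l₂ + τ • (y₂ + c₂)))
    (hres : S₁ x₁ - c₁ - (1 / τ) • l₁ = 0) :
    τ ≤ K₁ * (K₁ * (‖c₁‖ + R) + K₂ * (‖S₁‖ + ‖S₂‖ * (R + (1 + ‖c₂‖)))) := by
  have hτ₀ : τ ≠ 0 := by positivity
  have hscaled (l : E) (hl : ‖l‖ ≤ R) : ‖(1 / τ) • l‖ ≤ R := by
    rw [norm_smul, norm_div, norm_one, Real.norm_of_nonneg (by positivity), one_div_mul_eq_div]
    exact (div_le_self (norm_nonneg l) hτ).trans hl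
  have hx : x₁ - x₂ = τ • S₁ y₁ := sub_eq_smul_of_residual_eq_zero hτ₀ hQ₁ h₁ hres
  have hx₁ : ‖x₁‖ ≤ K₁ * (‖c₁‖ + R) := calc
    ‖x₁‖ ≤ K₁ * ‖S₁ x₁‖ := ZeroHomClass.bound_of_antilipschitz S₁ hS₁ x₁
    _ = K₁ * ‖c₁ + (1 / τ) • l₁‖ := by rw [sub_sub, sub_eq_zero] at hres; rw [hres]
    _ ≤ K₁ * (‖c₁‖ + R) := by
      gcongr
      exact (norm_add_le _ _).trans (by gcongr; exact hscaled l₁ hl₁)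
  have hx₂ : ‖x₂‖ ≤ K₂ * (‖S₁‖ + ‖S₂‖ * (R + (1 + ‖c₂‖))) := calc
    ‖x₂‖ ≤ K₂ * ‖Q₂ x₂‖ := ZeroHomClass.bound_of_antilipschitz Q₂ hQ₂ x₂
    _ = K₂ * ‖S₁ y₁ + S₂ ((1 / τ) • l₂ + (y₂ + c₂))‖ := by
      rw [apply_eq_of_sub_eq_smul hτ₀ h₂ hx]
    _ ≤ K₂ * (‖S₁‖ + ‖S₂‖ * (R + (1 + ‖c₂‖))) := by
      gcongr
      refine (norm_add_le _ _).trans (add_le_add ?_ ?_)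
      · simpa [hy₁] using S₁.le_opNorm y₁
      · have hw : ‖(1 / τ) • l₂ + (y₂ + c₂)‖ ≤ R + (1 + ‖c₂‖) :=
          (norm_add_le _ _).trans
            (add_le_add (hscaled l₂ hl₂) ((norm_add_le _ _).trans (by gcongr)))
        exact (S₂.le_opNorm _).trans (by gcongr)
  calc τ = τ * ‖y₁‖ := by rw [hy₁, mul_one]
    _ ≤ τ * (K₁ * ‖S₁ y₁‖) := by gcongr; exact ZeroHomClass.bound_of_antilipschitz S₁ hS₁ y₁
    _ = K₁ * ‖x₁ - x₂‖ := by rw [hx, norm_smul, Real.norm_of_nonneg (by positivity)]; ring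
    _ ≤ K₁ * (‖x₁‖ + ‖x₂‖) := by gcongr; exact norm_sub_le x₁ x₂
    _ ≤ _ := by gcongr

end ResidualBound

theorem stmt_14_general (d : ℕ)
    (Q₁ Q₂ S₁ S₂ : Matrix (Fin d) (Fin d) ℝ)
    (hQ₁ : Q₁.PosDef) (hQ₂ : Q₂.PosDef) (hS₁ : S₁.PosDef) (hS₂ : S₂.PosDef)
    (hS₁Q : S₁ * S₁ = Q₁) (hS₂Q : S₂ * S₂ = Q₂)
    (c₁ c₂ : EuclideanSpace ℝ (Fin d))
    (Λ : Set (EuclideanSpace ℝ (Fin d) × EuclideanSpace ℝ (Fin d)))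
    (hΛ : Bornology.IsBounded Λ) :
    ∃ τs : ℝ, 0 < τs ∧
      ∀ τ : ℝ, τs ≤ τ →
        ∀ l ∈ Λ, ∀ y₁ y₂ : EuclideanSpace ℝ (Fin d), ‖y₁‖ = 1 → ‖y₂‖ = 1 →
          ∀ x₁ x₂ : EuclideanSpace ℝ (Fin d),
            (x₁ + τ • Matrix.toEuclideanLin Q₁ x₁ - x₂
                = Matrix.toEuclideanLin S₁ (l.1 + τ • (y₁ + c₁))
              ∧ -x₁ + (x₂ + τ • Matrix.toEuclideanLin Q₂ x₂)
                = Matrix.toEuclideanLin S₂ (l.2 + τ • (y₂ + c₂))) →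
            Matrix.toEuclideanLin S₁ x₁ - c₁ - (1 / τ) • l.1 ≠ 0 ∧
            Matrix.toEuclideanLin S₂ x₂ - c₂ - (1 / τ) • l.2 ≠ 0 := by
  set A := toEuclideanCLM (n := Fin d) (𝕜 := ℝ)
  have hA_sq {S Q : Matrix (Fin d) (Fin d) ℝ} (h : S * S = Q) : A Q = A S * A S := by
    rw [← h, map_mul]
  obtain ⟨K₁, hK₁⟩ := exists_antilipschitzWith_toEuclideanCLM hS₁.isUnit
  obtain ⟨K₂, hK₂⟩ := exists_antilipschitzWith_toEuclideanCLM hS₂.isUnit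
  obtain ⟨L₁, hL₁⟩ := exists_antilipschitzWith_toEuclideanCLM hQ₁.isUnit
  obtain ⟨L₂, hL₂⟩ := exists_antilipschitzWith_toEuclideanCLM hQ₂.isUnit
  obtain ⟨R, hR⟩ := hΛ.exists_norm_le
  set B₁ := K₁ * (K₁ * (‖c₁‖ + R) + L₂ * (‖A S₁‖ + ‖A S₂‖ * (R + (1 + ‖c₂‖))))
  set B₂ := K₂ * (K₂ * (‖c₂‖ + R) + L₁ * (‖A S₂‖ + ‖A S₁‖ * (R + (1 + ‖c₁‖))))
  refine ⟨max 1 (max B₁ B₂ + 1), by positivity, fun τ hτ l hl y₁ y₂ hy₁ hy₂ x₁ x₂ ⟨h₁, h₂⟩ =>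
    ⟨fun hres => ?_, fun hres => ?_⟩⟩
  · have hτB := le_of_residual_eq_zero (S₂ := A S₂) hK₁ hL₂ (hA_sq hS₁Q) (le_of_max_le_left hτ)
      ((norm_fst_le l).trans (hR l hl)) ((norm_snd_le l).trans (hR l hl)) hy₁ hy₂.le
      h₁ ((neg_add_eq_sub _ _).symm.trans h₂) hres
    linarith [le_of_max_le_right hτ, le_max_left B₁ B₂]
  · have hτB := le_of_residual_eq_zero (S₂ := A S₁) hK₂ hL₁ (hA_sq hS₂Q) (le_of_max_le_left hτ)
      ((norm_snd_le l).trans (hR l hl)) ((norm_fst_le l).trans (hR l hl)) hy₂ hy₁.le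
      ((neg_add_eq_sub _ _).symm.trans h₂) h₁ hres
    linarith [le_of_max_le_right hτ, le_max_right B₁ B₂]

/-- nondegeneracy lemma for the ADMM x-step: for any bounded set `Λ` of
multipliers there exists `τ* > 0` such that for all `τ ≥ τ*`, all `λ ∈ Λ`, and all unit
vectors `y₁, y₂`, any solution `x*` of `H(τ)x* = diag(S₁,S₂)(λ + τ(y + c))` satisfies
`Sᵢxᵢ* − cᵢ − (1/τ)λᵢ ≠ 0` for `i ∈ {1,2}`. -/
theorem stmt_14 (d : ℕ)
    (Q₁ Q₂ S₁ S₂ : Matrix (Fin d) (Fin d) ℝ)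
    (hQ₁ : Q₁.PosDef) (hQ₂ : Q₂.PosDef) (hS₁ : S₁.PosDef) (hS₂ : S₂.PosDef)
    (hS₁Q : S₁ * S₁ = Q₁) (hS₂Q : S₂ * S₂ = Q₂)
    (z₁ z₂ c₁ c₂ : EuclideanSpace ℝ (Fin d))
    (hc₁ : c₁ = Matrix.toEuclideanLin S₁ z₁) (hc₂ : c₂ = Matrix.toEuclideanLin S₂ z₂)
    (Λ : Set (EuclideanSpace ℝ (Fin d) × EuclideanSpace ℝ (Fin d)))
    (hΛ : Bornology.IsBounded Λ) :
    ∃ τs : ℝ, 0 < τs ∧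
      ∀ τ : ℝ, τs ≤ τ →
        ∀ l ∈ Λ, ∀ y₁ y₂ : EuclideanSpace ℝ (Fin d), ‖y₁‖ = 1 → ‖y₂‖ = 1 →
          ∀ x₁ x₂ : EuclideanSpace ℝ (Fin d),
            (x₁ + τ • Matrix.toEuclideanLin Q₁ x₁ - x₂
                = Matrix.toEuclideanLin S₁ (l.1 + τ • (y₁ + c₁))
              ∧ -x₁ + (x₂ + τ • Matrix.toEuclideanLin Q₂ x₂)
                = Matrix.toEuclideanLin S₂ (l.2 + τ • (y₂ + c₂))) →
            Matrix.toEuclideanLin S₁ x₁ - c₁ - (1 / τ) • l.1 ≠ 0 ∧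
            Matrix.toEuclideanLin S₂ x₂ - c₂ - (1 / τ) • l.2 ≠ 0 :=
  stmt_14_general d Q₁ Q₂ S₁ S₂ hQ₁ hQ₂ hS₁ hS₂ hS₁Q hS₂Q c₁ c₂ Λ hΛ
end

section
/- (Proposition on the nonconvex ADMM with unbounded penalty.) Let τₙ > 0 be a nondecreasing sequence with τₙ → +∞, and let sequences xⁿ, yⁿ, λⁿ in ℝ^d × ℝ^d satisfy for all n: x^{n+1} is the unique solution of H(τₙ)x^{n+1} = diag(S₁, S₂)(λⁿ + τₙ(yⁿ + c)); ‖yᵢ^{n+1}‖ = 1 and yᵢ^{n+1} = vᵢⁿ/‖vᵢⁿ‖ whenever vᵢⁿ := Sᵢxᵢ^{n+1} − cᵢ − (1/τₙ)λᵢⁿ ≠ 0; and λᵢ^{n+1} = λᵢⁿ − τₙ(Sᵢxᵢ^{n+1} − yᵢ^{n+1} − cᵢ), for i ∈ {1,2}. Suppose the sequence (λⁿ) is bounded. Then: (a) the sequence (xⁿ, yⁿ) is bounded and every limit point (x*, y*) of (xⁿ, yⁿ) is feasible, i.e. Sᵢxᵢ* − yᵢ* = cᵢ and ‖yᵢ*‖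 = 1 for i ∈ {1,2}; (b) every limit point (x*, y*, λ*) of the sequence (xⁿ, yⁿ, λⁿ) satisfies the KKT conditions — x₁* − x₂* − S₁λ₁* = 0, x₂* − x₁* − S₂λ₂* = 0, and for each i there exists μᵢ* ∈ ℝ with λᵢ* + μᵢ*yᵢ* = 0, Sᵢxᵢ* − yᵢ* = cᵢ, ‖yᵢ*‖ = 1 — if and only if τₙ‖y^{n+1} − yⁿ‖ → 0 as n → ∞. -/
open Matrix Filter

/-!
The multiplier update reads `Sᵢxᵢⁿ⁺¹ - yᵢⁿ⁺¹ - cᵢ = (λᵢⁿ - λᵢⁿ⁺¹) / τₙ`, so bounded multipliers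
and `τₙ → ∞` drive the constraint residual to zero. As `yⁿ⁺¹` lies on the unit spheres and `Sᵢ`
is invertible, this bounds `xⁿ` and makes every limit point feasible.

Substituting `Qᵢ = SᵢSᵢ` and the multiplier update into the `x`-update gives the exact identity
`x₁ⁿ⁺¹ - x₂ⁿ⁺¹ - S₁λ₁ⁿ⁺¹ = S₁(τₙ(y₁ⁿ - y₁ⁿ⁺¹))`, and symmetrically for the second block. Since
the iterates are bounded and `Sᵢ` is invertible, the left side vanishes at every limit point
exactly when `τₙ(yⁿ - yⁿ⁺¹) → 0`. The remaining KKT condition is automatic: the `y`-update makes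
`λᵢⁿ⁺¹` a multiple of the unit vector `yᵢⁿ⁺¹`.
-/

open Bornology Set Topology

noncomputable def Matrix.toEuclideanCLEOfIsUnit {𝕜 n : Type*} [RCLike 𝕜] [Fintype n] [DecidableEq n]
    {S : Matrix n n 𝕜} (hS : IsUnit S) : EuclideanSpace 𝕜 n ≃L[𝕜] EuclideanSpace 𝕜 n :=
  ContinuousLinearEquiv.unitsEquiv 𝕜 _ (hS.map (Matrix.toEuclideanCLM (𝕜 := 𝕜) (n := n))).unit

section Step

variable {E : Type*}

lemma eq_inv_smul_sub_of_eq_sub_smul {K : Type*} [Field K] [AddCommGroup E] [Module K E] {τ : K}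
    (hτ : τ ≠ 0) {r l₀ l₁ : E} (hl : l₁ = l₀ - τ • r) : r = τ⁻¹ • (l₀ - l₁) := by
  rw [hl, sub_sub_cancel, inv_smul_smul₀ hτ]

lemma sub_sub_apply_eq_apply_smul_sub [AddCommGroup E] [Module ℝ E] (T : E →ₗ[ℝ] E) {τ : ℝ}
    {u v y₀ y₁ l₀ l₁ c : E} (hu : u + τ • T (T u) - v = T (l₀ + τ • (y₀ + c)))
    (hl : l₁ = l₀ - τ • (T u - y₁ - c)) :
    u - v - T l₁ = T (τ • (y₀ - y₁)) := by
  subst hl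
  simp only [map_add, map_sub, map_smul] at hu ⊢
  linear_combination (norm := module) hu

lemma exists_eq_smul_of_eq_inv_norm_smul [NormedAddCommGroup E] [NormedSpace ℝ E] {v y : E}
    (hy : v ≠ 0 → y = ‖v‖⁻¹ • v) : ∃ t : ℝ, v = t • y := by
  by_cases hv : v = 0
  · exact ⟨0, by rw [hv, zero_smul]⟩
  · exact ⟨‖v‖, by rw [hy hv, smul_smul, mul_inv_cancel₀ (norm_ne_zero_iff.2 hv), one_smul]⟩

variable [NormedAddCommGroup E] [InnerProductSpace ℝ E]

lemma eq_inner_smul_of_eq_smul {y l : E} {μ : ℝ} (hy : ‖y‖ = 1) (hl : l = μ • y) :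
    l = inner ℝ y l • y := by
  rw [hl, real_inner_smul_right, real_inner_self_eq_norm_sq, hy, one_pow, mul_one]

lemma eq_inner_smul_of_eq_sub_smul {τ : ℝ} (hτ : τ ≠ 0) {w c y₁ l₀ l₁ : E} (hy₁ : ‖y₁‖ = 1)
    (hy : w - c - (1 / τ) • l₀ ≠ 0 →
      y₁ = ‖w - c - (1 / τ) • l₀‖⁻¹ • (w - c - (1 / τ) • l₀))
    (hl : l₁ = l₀ - τ • (w - y₁ - c)) :
    l₁ = inner ℝ y₁ l₁ • y₁ := by
  obtain ⟨t, ht⟩ := exists_eq_smul_of_eq_inv_norm_smul hy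
  have hl₀ : l₀ = τ • (w - c - t • y₁) := by
    rw [← ht, sub_sub_cancel, smul_smul, mul_one_div_cancel hτ, one_smul]
  refine eq_inner_smul_of_eq_smul (μ := τ - τ * t) hy₁ ?_
  rw [hl, hl₀]
  module

end Step

section Limits

variable {X Y : Type*} [TopologicalSpace Y]

theorem map_eq_of_tendsto_comp_subseq [TopologicalSpace X] [T2Space Y] {w : ℕ → X} {F : X → Y}
    (hF : Continuous F) {b : Y} (hw : Tendsto (F ∘ w) atTop (𝓝 b)) {φ : ℕ → ℕ}
    (hφ : StrictMono φ) {a : X} (ha : Tendsto (w ∘ φ) atTop (𝓝 a)) : F a = b :=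
  tendsto_nhds_unique ((hF.tendsto a).comp ha) (hw.comp hφ.tendsto_atTop)

theorem IsClosed.mem_of_tendsto_subseq [TopologicalSpace X] {w : ℕ → X} {s : Set X}
    (hs : IsClosed s) (hw : ∀ n, w (n + 1) ∈ s) {φ : ℕ → ℕ} (hφ : StrictMono φ) {a : X}
    (ha : Tendsto (w ∘ φ) atTop (𝓝 a)) : a ∈ s := by
  refine hs.mem_of_tendsto ha ((hφ.tendsto_atTop.eventually (eventually_ge_atTop 1)).mono ?_)
  intro k hk
  obtain ⟨m, hm⟩ := Nat.exists_eq_add_of_le' hk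
  simpa [hm] using hw m

theorem Bornology.IsBounded.range_of_forall_succ_mem [Bornology X] {s : Set X} (hs : IsBounded s)
    {w : ℕ → X} (hw : ∀ n, w (n + 1) ∈ s) : IsBounded (range w) := by
  refine (hs.insert (w 0)).subset (range_subset_iff.2 fun n => ?_)
  cases n with
  | zero => exact mem_insert _ _
  | succ n => exact mem_insert_of_mem _ (hw n)

theorem tendsto_comp_iff_forall_subseq [PseudoMetricSpace X] [ProperSpace X] [T2Space Y]
    {F : X → Y} (hF : Continuous F) {w : ℕ → X} (hw : IsBounded (range w)) {b : Y} :
    Tendsto (F ∘ w) atTop (𝓝 b) ↔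
      ∀ (a : X) (φ : ℕ → ℕ), StrictMono φ → Tendsto (w ∘ φ) atTop (𝓝 a) → F a = b := by
  refine ⟨fun h a φ hφ ha => map_eq_of_tendsto_comp_subseq hF h hφ ha,
    fun h => tendsto_of_subseq_tendsto fun ns hns => ?_⟩
  obtain ⟨g, -, hnsg⟩ := strictMono_subseq_of_tendsto_atTop hns
  obtain ⟨a, -, ms, hms, ha⟩ := tendsto_subseq_of_bounded hw fun k => mem_range_self (ns (g k))
  refine ⟨g ∘ ms, ?_⟩
  rw [← h a _ (hnsg.comp hms) ha]
  exact (hF.tendsto a).comp ha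

end Limits

section Norms

variable {E F : Type*} [SeminormedAddCommGroup E] [SeminormedAddCommGroup F]

lemma Prod.norm_le_sqrt_norm_sq_add_norm_sq (p : E × F) : ‖p‖ ≤ √(‖p.1‖ ^ 2 + ‖p.2‖ ^ 2) := by
  refine Real.le_sqrt_of_sq_le ?_
  rw [Prod.norm_def]
  rcases max_choice ‖p.1‖ ‖p.2‖ with h | h <;> rw [h] <;>
    nlinarith [sq_nonneg ‖p.1‖, sq_nonneg ‖p.2‖]

lemma Prod.sqrt_norm_sq_add_norm_sq_le (p : E × F) : √(‖p.1‖ ^ 2 + ‖p.2‖ ^ 2) ≤ 2 * ‖p‖ := by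
  refine Real.sqrt_le_iff.2 ⟨by positivity, ?_⟩
  nlinarith [norm_fst_le p, norm_snd_le p, norm_nonneg p.1, norm_nonneg p.2]

theorem tendsto_mul_sqrt_norm_sq_add_norm_sq_iff {ι : Type*} {L : Filter ι} {τ : ι → ℝ}
    (hτ : ∀ i, 0 ≤ τ i) {f : ι → E × F} :
    Tendsto (fun i => τ i * √(‖(f i).1‖ ^ 2 + ‖(f i).2‖ ^ 2)) L (𝓝 0) ↔
      Tendsto (fun i => τ i * ‖f i‖) L (𝓝 0) := by
  constructor <;> intro h
  · exact squeeze_zero (fun i => mul_nonneg (hτ i) (norm_nonneg _))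
      (fun i => mul_le_mul_of_nonneg_left (f i).norm_le_sqrt_norm_sq_add_norm_sq (hτ i)) h
  · refine squeeze_zero (fun i => mul_nonneg (hτ i) (Real.sqrt_nonneg _)) (fun i => ?_)
      (by simpa using h.const_mul 2)
    calc τ i * √(‖(f i).1‖ ^ 2 + ‖(f i).2‖ ^ 2) ≤ τ i * (2 * ‖f i‖) :=
          mul_le_mul_of_nonneg_left (f i).sqrt_norm_sq_add_norm_sq_le (hτ i)
      _ = 2 * (τ i * ‖f i‖) := by ring

end Norms

section Penalty

variable {P : Type*} [NormedAddCommGroup P] [NormedSpace ℝ P] {τ : ℕ → ℝ} {x y l : ℕ → P}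

theorem tendsto_of_sub_eq_inv_smul_sub {r : ℕ → P} {c : P} (hτ : Tendsto τ atTop atTop)
    (hl : IsBounded (range l)) (hr : ∀ n, r (n + 1) - c = (τ n)⁻¹ • (l n - l (n + 1))) :
    Tendsto r atTop (𝓝 c) := by
  obtain ⟨C, hC⟩ := isBounded_iff_forall_norm_le.1 hl
  rw [← tendsto_add_atTop_iff_nat 1, ← tendsto_sub_nhds_zero_iff]
  simp only [hr]
  refine hτ.inv_tendsto_atTop.zero_smul_isBoundedUnder_le (isBoundedUnder_of ⟨C + C, fun n => ?_⟩)
  exact (norm_sub_le _ _).trans (add_le_add (hC _ (mem_range_self _)) (hC _ (mem_range_self _)))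

theorem isBounded_range_of_tendsto_apply_sub (D : P ≃L[ℝ] P) {c : P}
    (hr : Tendsto (fun n => D (x n) - y n) atTop (𝓝 c)) (hy : IsBounded (range y)) :
    IsBounded (range x) := by
  have hDx : IsBounded (range fun n => D (x n)) :=
    ((Metric.isBounded_range_of_tendsto _ hr).add hy).subset <| range_subset_iff.2 fun n =>
      ⟨_, mem_range_self n, _, mem_range_self n, sub_add_cancel _ _⟩
  simpa [← range_comp, Function.comp_def] using D.symm.lipschitz.isBounded_image hDx

theorem sub_eq_and_mem_of_tendsto_subseq (D : P →L[ℝ] P) {c : P} {U : Set P} (hU : IsClosed U)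
    (hr : Tendsto (fun n => D (x n) - y n) atTop (𝓝 c)) (hy : ∀ n, y (n + 1) ∈ U) {xs ys : P}
    {φ : ℕ → ℕ} (hφ : StrictMono φ) (h : Tendsto (fun k => (x (φ k), y (φ k))) atTop (𝓝 (xs, ys))) :
    D xs - ys = c ∧ ys ∈ U :=
  ⟨map_eq_of_tendsto_comp_subseq (w := fun n => (x n, y n)) (F := fun p => D p.1 - p.2)
    (by fun_prop) hr hφ h, hU.mem_of_tendsto_subseq hy hφ h.snd_nhds⟩

theorem forall_subseq_limit_sub_eq_zero_iff [ProperSpace P] (D : P ≃L[ℝ] P) {J : P → P}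
    (hJ : Continuous J) (hτ : ∀ n, 0 < τ n) (hw : IsBounded (range fun n => (x n, y n, l n)))
    (hK : ∀ n, J (x (n + 1)) - D (l (n + 1)) = D (τ n • (y n - y (n + 1)))) :
    (∀ (xs ys ls : P) (φ : ℕ → ℕ), StrictMono φ →
        Tendsto (fun k => (x (φ k), y (φ k), l (φ k))) atTop (𝓝 (xs, ys, ls)) →
        J xs - D ls = 0) ↔
      Tendsto (fun n => τ n * ‖y (n + 1) - y n‖) atTop (𝓝 0) := by
  have hF : Continuous fun p : P × P × P => J p.1 - D p.2.2 := by fun_prop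
  have hnorm : ∀ n, τ n * ‖y (n + 1) - y n‖ = ‖τ n • (y n - y (n + 1))‖ := fun n => by
    rw [norm_smul, Real.norm_of_nonneg (hτ n).le, norm_sub_rev]
  calc _ ↔ Tendsto ((fun p : P × P × P => J p.1 - D p.2.2) ∘ fun n => (x n, y n, l n))
        atTop (𝓝 0) := by
        rw [tendsto_comp_iff_forall_subseq hF hw]
        simp only [Prod.forall]
        rfl
    _ ↔ Tendsto (fun n => D (τ n • (y n - y (n + 1)))) atTop (𝓝 (D 0)) := by
        rw [map_zero, ← tendsto_add_atTop_iff_nat 1]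
        simp only [Function.comp_def, hK]
    _ ↔ Tendsto (fun n => τ n • (y n - y (n + 1))) atTop (𝓝 0) :=
        D.toHomeomorph.isInducing.tendsto_nhds_iff.symm
    _ ↔ _ := by simp only [tendsto_zero_iff_norm_tendsto_zero (f := fun n => τ n • _), hnorm]

end Penalty

theorem stmt_17_general (d : ℕ)
    (Q₁ Q₂ S₁ S₂ : Matrix (Fin d) (Fin d) ℝ)
    (hS₁ : S₁.PosDef) (hS₂ : S₂.PosDef)
    (hS₁Q : S₁ * S₁ = Q₁) (hS₂Q : S₂ * S₂ = Q₂)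
    (c₁ c₂ : EuclideanSpace ℝ (Fin d))
    (τ : ℕ → ℝ) (hτpos : ∀ n, 0 < τ n)
    (hτtop : Tendsto τ atTop atTop)
    (x y l : ℕ → EuclideanSpace ℝ (Fin d) × EuclideanSpace ℝ (Fin d))
    -- x-update: x^{n+1} solves H(τₙ) x^{n+1} = diag(S₁,S₂)(λⁿ + τₙ(yⁿ + c))
    (hx : ∀ n : ℕ,
      (x (n + 1)).1 + τ n • Matrix.toEuclideanLin Q₁ (x (n + 1)).1 - (x (n + 1)).2
          = Matrix.toEuclideanLin S₁ ((l n).1 + τ n • ((y n).1 + c₁)) ∧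
      -(x (n + 1)).1 + ((x (n + 1)).2 + τ n • Matrix.toEuclideanLin Q₂ (x (n + 1)).2)
          = Matrix.toEuclideanLin S₂ ((l n).2 + τ n • ((y n).2 + c₂)))
    -- y-update
    (hy : ∀ n : ℕ,
      (‖(y (n + 1)).1‖ = 1 ∧
        (Matrix.toEuclideanLin S₁ (x (n + 1)).1 - c₁ - (1 / τ n) • (l n).1 ≠ 0 →
          (y (n + 1)).1
            = ‖Matrix.toEuclideanLin S₁ (x (n + 1)).1 - c₁ - (1 / τ n) • (l n).1‖⁻¹
                • (Matrix.toEuclideanLin S₁ (x (n + 1)).1 - c₁ - (1 / τ n) • (l n).1))) ∧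
      (‖(y (n + 1)).2‖ = 1 ∧
        (Matrix.toEuclideanLin S₂ (x (n + 1)).2 - c₂ - (1 / τ n) • (l n).2 ≠ 0 →
          (y (n + 1)).2
            = ‖Matrix.toEuclideanLin S₂ (x (n + 1)).2 - c₂ - (1 / τ n) • (l n).2‖⁻¹
                • (Matrix.toEuclideanLin S₂ (x (n + 1)).2 - c₂ - (1 / τ n) • (l n).2))))
    -- multiplier update
    (hl : ∀ n : ℕ,
      (l (n + 1)).1 = (l n).1
          - τ n • (Matrix.toEuclideanLin S₁ (x (n + 1)).1 - (y (n + 1)).1 - c₁) ∧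
      (l (n + 1)).2 = (l n).2
          - τ n • (Matrix.toEuclideanLin S₂ (x (n + 1)).2 - (y (n + 1)).2 - c₂))
    -- boundedness of the multipliers
    (hlbdd : ∃ C : ℝ, ∀ n : ℕ, ‖(l n).1‖ ≤ C ∧ ‖(l n).2‖ ≤ C) :
    -- (a) boundedness of (xⁿ, yⁿ) and feasibility of its limit points
    ((∃ C : ℝ, ∀ n : ℕ,
        ‖(x n).1‖ ≤ C ∧ ‖(x n).2‖ ≤ C ∧ ‖(y n).1‖ ≤ C ∧ ‖(y n).2‖ ≤ C) ∧
      (∀ (xs ys : EuclideanSpace ℝ (Fin d) × EuclideanSpace ℝ (Fin d)) (φ : ℕ → ℕ),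
        StrictMono φ →
        Tendsto (fun k => (x (φ k), y (φ k))) atTop (nhds (xs, ys)) →
        (Matrix.toEuclideanLin S₁ xs.1 - ys.1 = c₁ ∧
          Matrix.toEuclideanLin S₂ xs.2 - ys.2 = c₂ ∧
          ‖ys.1‖ = 1 ∧ ‖ys.2‖ = 1))) ∧
    -- (b) limit points are KKT points iff τₙ‖y^{n+1} − yⁿ‖ → 0
    ((∀ (xs ys ls : EuclideanSpace ℝ (Fin d) × EuclideanSpace ℝ (Fin d)) (φ : ℕ → ℕ),
        StrictMono φ →
        Tendsto (fun k => (x (φ k), y (φ k), l (φ k))) atTop (nhds (xs, ys, ls)) →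
        (xs.1 - xs.2 - Matrix.toEuclideanLin S₁ ls.1 = 0 ∧
          xs.2 - xs.1 - Matrix.toEuclideanLin S₂ ls.2 = 0 ∧
          (∃ μ₁ : ℝ, ls.1 + μ₁ • ys.1 = 0) ∧ (∃ μ₂ : ℝ, ls.2 + μ₂ • ys.2 = 0) ∧
          Matrix.toEuclideanLin S₁ xs.1 - ys.1 = c₁ ∧
          Matrix.toEuclideanLin S₂ xs.2 - ys.2 = c₂ ∧
          ‖ys.1‖ = 1 ∧ ‖ys.2‖ = 1))
      ↔ Tendsto (fun n =>
          τ n * Real.sqrt (‖(y (n + 1)).1 - (y n).1‖ ^ 2 + ‖(y (n + 1)).2 - (y n).2‖ ^ 2))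
          atTop (nhds 0)) := by
  subst hS₁Q hS₂Q
  simp only [toLpLin_mul_same, LinearMap.coe_comp, Function.comp_apply] at hx
  obtain ⟨C, hC⟩ := hlbdd
  let D := (toEuclideanCLEOfIsUnit hS₁.isUnit).prodCongr (toEuclideanCLEOfIsUnit hS₂.isUnit)
  let J := fun p : EuclideanSpace ℝ (Fin d) × EuclideanSpace ℝ (Fin d) => (p.1 - p.2, p.2 - p.1)
  let U := {p : EuclideanSpace ℝ (Fin d) × EuclideanSpace ℝ (Fin d) | ‖p.1‖ = 1 ∧ ‖p.2‖ = 1}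
  have hU : IsClosed U :=
    (isClosed_eq (by fun_prop) continuous_const).inter (isClosed_eq (by fun_prop) continuous_const)
  have hyU : ∀ n, y (n + 1) ∈ U := fun n => ⟨(hy n).1.1, (hy n).2.1⟩
  have hlb : IsBounded (range l) :=
    isBounded_iff_forall_norm_le.2 ⟨C, forall_mem_range.2 fun n => norm_prod_le_iff.2 (hC n)⟩
  have hyb : IsBounded (range y) :=
    (isBounded_iff_forall_norm_le.2 ⟨1, fun p hp => norm_prod_le_iff.2 ⟨hp.1.le, hp.2.le⟩⟩
      ).range_of_forall_succ_mem hyU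
  have hres : Tendsto (fun n => D (x n) - y n) atTop (𝓝 (c₁, c₂)) :=
    tendsto_of_sub_eq_inv_smul_sub hτtop hlb fun n =>
      Prod.ext (eq_inv_smul_sub_of_eq_sub_smul (hτpos n).ne' (hl n).1)
        (eq_inv_smul_sub_of_eq_sub_smul (hτpos n).ne' (hl n).2)
  have hw : IsBounded (range fun n => (x n, y n, l n)) :=
    ((isBounded_range_of_tendsto_apply_sub D hres hyb).prod (hyb.prod hlb)).subset <|
      range_subset_iff.2 fun n => ⟨mem_range_self n, mem_range_self n, mem_range_self n⟩
  have hstat : ∀ n, J (x (n + 1)) - D (l (n + 1)) = D (τ n • (y n - y (n + 1))) := fun n =>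
    Prod.ext (sub_sub_apply_eq_apply_smul_sub _ (hx n).1 (hl n).1)
      (sub_sub_apply_eq_apply_smul_sub _ (by rw [← (hx n).2]; abel) (hl n).2)
  obtain ⟨B, hB⟩ := isBounded_iff_forall_norm_le.1 hw
  refine ⟨⟨⟨B, fun n => ?_⟩, fun xs ys φ hφ h => ?_⟩, Iff.trans ?_
    ((forall_subseq_limit_sub_eq_zero_iff D (by fun_prop) hτpos hw hstat).trans
      (tendsto_mul_sqrt_norm_sq_add_norm_sq_iff fun n => (hτpos n).le).symm)⟩
  · have hn := hB _ (mem_range_self n)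
    simp only [norm_prod_le_iff] at hn
    exact ⟨hn.1.1, hn.1.2, hn.2.1.1, hn.2.1.2⟩
  · obtain ⟨hf, hu⟩ := sub_eq_and_mem_of_tendsto_subseq D.toContinuousLinearMap hU hres hyU hφ h
    exact ⟨congrArg Prod.fst hf, congrArg Prod.snd hf, hu⟩
  refine forall₄_congr fun xs ys ls φ => forall₂_congr fun hφ h => ?_
  obtain ⟨hf, hu⟩ := sub_eq_and_mem_of_tendsto_subseq D.toContinuousLinearMap hU hres hyU hφ
    (h.fst_nhds.prodMk_nhds h.snd_nhds.fst_nhds)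
  -- `λ ∈ ℝ y` is not closed, but for unit `y` it is the closed condition `λ = ⟪y, λ⟫ y`.
  obtain ⟨hc₁, hc₂⟩ := IsClosed.mem_of_tendsto_subseq (w := fun n => (y n, l n))
    (s := {q | q.2.1 = inner ℝ q.1.1 q.2.1 • q.1.1 ∧ q.2.2 = inner ℝ q.1.2 q.2.2 • q.1.2})
    ((isClosed_eq (by fun_prop) (by fun_prop)).inter (isClosed_eq (by fun_prop) (by fun_prop)))
    (fun n => ⟨eq_inner_smul_of_eq_sub_smul (hτpos n).ne' (hy n).1.1 (hy n).1.2 (hl n).1,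
      eq_inner_smul_of_eq_sub_smul (hτpos n).ne' (hy n).2.1 (hy n).2.2 (hl n).2⟩) hφ h.snd_nhds
  rw [Prod.ext_iff]
  exact ⟨fun hk => ⟨hk.1, hk.2.1⟩, fun hk => ⟨hk.1, hk.2,
    ⟨-inner ℝ ys.1 ls.1, by rw [neg_smul, ← sub_eq_add_neg, ← hc₁, sub_self]⟩,
    ⟨-inner ℝ ys.2 ls.2, by rw [neg_smul, ← sub_eq_add_neg, ← hc₂, sub_self]⟩,
    congrArg Prod.fst hf, congrArg Prod.snd hf, hu⟩⟩

/-- proposition on the nonconvex ADMM with unbounded penalty: if the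
penalty parameters increase unboundedly and the multipliers remain bounded, then the
sequence `(xⁿ, yⁿ)` is bounded, all its limit points are feasible, and all limit points
of `(xⁿ, yⁿ, λⁿ)` satisfy the KKT conditions iff `τₙ‖y^{n+1} − yⁿ‖ → 0`. -/
theorem stmt_17 (d : ℕ)
    (Q₁ Q₂ S₁ S₂ : Matrix (Fin d) (Fin d) ℝ)
    (hQ₁ : Q₁.PosDef) (hQ₂ : Q₂.PosDef) (hS₁ : S₁.PosDef) (hS₂ : S₂.PosDef)
    (hS₁Q : S₁ * S₁ = Q₁) (hS₂Q : S₂ * S₂ = Q₂)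
    (z₁ z₂ c₁ c₂ : EuclideanSpace ℝ (Fin d))
    (hc₁ : c₁ = Matrix.toEuclideanLin S₁ z₁) (hc₂ : c₂ = Matrix.toEuclideanLin S₂ z₂)
    (τ : ℕ → ℝ) (hτpos : ∀ n, 0 < τ n) (hτmono : Monotone τ)
    (hτtop : Tendsto τ atTop atTop)
    (x y l : ℕ → EuclideanSpace ℝ (Fin d) × EuclideanSpace ℝ (Fin d))
    -- x-update: x^{n+1} solves H(τₙ) x^{n+1} = diag(S₁,S₂)(λⁿ + τₙ(yⁿ + c))
    (hx : ∀ n : ℕ,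
      (x (n + 1)).1 + τ n • Matrix.toEuclideanLin Q₁ (x (n + 1)).1 - (x (n + 1)).2
          = Matrix.toEuclideanLin S₁ ((l n).1 + τ n • ((y n).1 + c₁)) ∧
      -(x (n + 1)).1 + ((x (n + 1)).2 + τ n • Matrix.toEuclideanLin Q₂ (x (n + 1)).2)
          = Matrix.toEuclideanLin S₂ ((l n).2 + τ n • ((y n).2 + c₂)))
    -- y-update
    (hy : ∀ n : ℕ,
      (‖(y (n + 1)).1‖ = 1 ∧
        (Matrix.toEuclideanLin S₁ (x (n + 1)).1 - c₁ - (1 / τ n) • (l n).1 ≠ 0 →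
          (y (n + 1)).1
            = ‖Matrix.toEuclideanLin S₁ (x (n + 1)).1 - c₁ - (1 / τ n) • (l n).1‖⁻¹
                • (Matrix.toEuclideanLin S₁ (x (n + 1)).1 - c₁ - (1 / τ n) • (l n).1))) ∧
      (‖(y (n + 1)).2‖ = 1 ∧
        (Matrix.toEuclideanLin S₂ (x (n + 1)).2 - c₂ - (1 / τ n) • (l n).2 ≠ 0 →
          (y (n + 1)).2
            = ‖Matrix.toEuclideanLin S₂ (x (n + 1)).2 - c₂ - (1 / τ n) • (l n).2‖⁻¹
                • (Matrix.toEuclideanLin S₂ (x (n + 1)).2 - c₂ - (1 / τ n) • (l n).2))))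
    -- multiplier update
    (hl : ∀ n : ℕ,
      (l (n + 1)).1 = (l n).1
          - τ n • (Matrix.toEuclideanLin S₁ (x (n + 1)).1 - (y (n + 1)).1 - c₁) ∧
      (l (n + 1)).2 = (l n).2
          - τ n • (Matrix.toEuclideanLin S₂ (x (n + 1)).2 - (y (n + 1)).2 - c₂))
    -- boundedness of the multipliers
    (hlbdd : ∃ C : ℝ, ∀ n : ℕ, ‖(l n).1‖ ≤ C ∧ ‖(l n).2‖ ≤ C) :
    -- (a) boundedness of (xⁿ, yⁿ) and feasibility of its limit points
    ((∃ C : ℝ, ∀ n : ℕ,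
        ‖(x n).1‖ ≤ C ∧ ‖(x n).2‖ ≤ C ∧ ‖(y n).1‖ ≤ C ∧ ‖(y n).2‖ ≤ C) ∧
      (∀ (xs ys : EuclideanSpace ℝ (Fin d) × EuclideanSpace ℝ (Fin d)) (φ : ℕ → ℕ),
        StrictMono φ →
        Tendsto (fun k => (x (φ k), y (φ k))) atTop (nhds (xs, ys)) →
        (Matrix.toEuclideanLin S₁ xs.1 - ys.1 = c₁ ∧
          Matrix.toEuclideanLin S₂ xs.2 - ys.2 = c₂ ∧
          ‖ys.1‖ = 1 ∧ ‖ys.2‖ = 1))) ∧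
    -- (b) limit points are KKT points iff τₙ‖y^{n+1} − yⁿ‖ → 0
    ((∀ (xs ys ls : EuclideanSpace ℝ (Fin d) × EuclideanSpace ℝ (Fin d)) (φ : ℕ → ℕ),
        StrictMono φ →
        Tendsto (fun k => (x (φ k), y (φ k), l (φ k))) atTop (nhds (xs, ys, ls)) →
        (xs.1 - xs.2 - Matrix.toEuclideanLin S₁ ls.1 = 0 ∧
          xs.2 - xs.1 - Matrix.toEuclideanLin S₂ ls.2 = 0 ∧
          (∃ μ₁ : ℝ, ls.1 + μ₁ • ys.1 = 0) ∧ (∃ μ₂ : ℝ, ls.2 + μ₂ • ys.2 = 0) ∧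
          Matrix.toEuclideanLin S₁ xs.1 - ys.1 = c₁ ∧
          Matrix.toEuclideanLin S₂ xs.2 - ys.2 = c₂ ∧
          ‖ys.1‖ = 1 ∧ ‖ys.2‖ = 1))
      ↔ Tendsto (fun n =>
          τ n * Real.sqrt (‖(y (n + 1)).1 - (y n).1‖ ^ 2 + ‖(y (n + 1)).2 - (y n).2‖ ^ 2))
          atTop (nhds 0)) :=
  stmt_17_general d Q₁ Q₂ S₁ S₂ hS₁ hS₂ hS₁Q hS₂Q c₁ c₂ τ hτpos hτtop x y l hx hy hl hlbdd
end
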